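/- Let J_x, A_x, J*_x, A*_x be m₁×n₁ real matrices with J_x + A_x = J*_x + A*_x = X. Suppose row(J_x) = row(J*_x), col(J_x) = col(J*_x), row(J_x) ∩ row(A_x) = {0}, col(J_x) ∩ col(A_x) = {0}, col(J*_x) ∩ col(A*_x) = {0}. Then the null space of A_x is contained in the null space of A*_x. -/
import Mathlib


open Matrix

/-- Row space of a matrix: the span of its rows in ℝⁿ. -/
def rowSpace {m n : ℕ} (M : Matrix (Fin m) (Fin n) ℝ) : Submodule ℝ (Fin n → ℝ) :=
  Submodule.span ℝ (Set.range (fun i => M i))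

/-- Column space of a matrix: the span of its columns in ℝᵐ. -/
def colSpace {m n : ℕ} (M : Matrix (Fin m) (Fin n) ℝ) : Submodule ℝ (Fin m → ℝ) :=
  Submodule.span ℝ (Set.range (fun j => Mᵀ j))


lemma mulVec_mem_colSpace {m n : ℕ} (M : Matrix (Fin m) (Fin n) ℝ) (v : Fin n → ℝ) :
    M.mulVec v ∈ colSpace M := by
  have h : M.mulVec v = ∑ j, v j • Mᵀ j := by
    ext i
    simp [Matrix.mulVec, dotProduct, Finset.sum_apply, mul_comm, Matrix.transpose]
  rw [h]
  exact Submodule.sum_mem _ (fun j _ => Submodule.smul_mem _ _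
    (Submodule.subset_span ⟨j, rfl⟩))

/-- Key lemma in Theorem 1 of the LMF-JIVE paper: N(A_x) ⊆ N(A*_x). -/
theorem null_space_containment {m1 n1 : ℕ}
    (Jx Ax Jxs Axs X : Matrix (Fin m1) (Fin n1) ℝ)
    (hX : Jx + Ax = X) (hXs : Jxs + Axs = X)
    (hrowJ : rowSpace Jx = rowSpace Jxs)
    (hcolJ : colSpace Jx = colSpace Jxs)
    (hrowInt : rowSpace Jx ⊓ rowSpace Ax = ⊥)
    (hcolInt : colSpace Jx ⊓ colSpace Ax = ⊥)
    (hcolInts : colSpace Jxs ⊓ colSpace Axs = ⊥) :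
    ∀ v : Fin n1 → ℝ, Ax.mulVec v = 0 → Axs.mulVec v = 0 := by
  intro v hv
  have hJx : Jx.mulVec v = X.mulVec v := by
    rw [← hX, Matrix.add_mulVec, hv, add_zero]
  have hAxs : Axs.mulVec v = Jx.mulVec v - Jxs.mulVec v := by
    rw [hJx, ← hXs, Matrix.add_mulVec]; abel
  have h1 : Axs.mulVec v ∈ colSpace Jxs := by
    rw [hAxs]
    exact Submodule.sub_mem _ (hcolJ ▸ mulVec_mem_colSpace Jx v) (mulVec_mem_colSpace Jxs v)
  have h2 : Axs.mulVec v ∈ colSpace Axs := mulVec_mem_colSpace Axs v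
  have : Axs.mulVec v ∈ colSpace Jxs ⊓ colSpace Axs := ⟨h1, h2⟩
  rwa [hcolInts, Submodule.mem_bot] at this
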